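/- arXiv:2010.07177 — 3 statements merged into one kernel-verified Lean document; each statement's English description precedes it below -/
import Mathlib

section
/- Let c be a prime and r ≥ 0. For every nonnegative integer k with base-c digits k = Σ k_s c^s, binomial(c^r + k, k) ≡ k_r + 1 (mod c). -/
/-- For a prime `c` and `r ≥ 0`: `C(c^r + k, k) ≡ k_r + 1 (mod c)`, where
`k_r = k / c^r % c` is the `r`-th base-`c` digit of `k`. -/
theorem stmt_12 (c : ℕ) (hc : c.Prime) (r k : ℕ) :
    ((c ^ r + k).choose k : ZMod c) = ((k / c ^ r % c : ℕ) : ZMod c) + 1 := by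
  haveI : Fact c.Prime := ⟨hc⟩
  have hcpos : 0 < c := hc.pos
  have h := Choose.choose_modEq_choose_mul_prod_range_choose (n := c ^ r + k) (k := k)
    (p := c) r
  have h1 : (c ^ r + k) / c ^ r = k / c ^ r + 1 := by
    rw [add_comm, Nat.add_div_right _ (pow_pos hcpos r)]
  have h2 : ∀ i ∈ Finset.range r,
      ((c ^ r + k) / c ^ i % c).choose (k / c ^ i % c) = 1 := by
    intro i hi
    rw [Finset.mem_range] at hi
    have he : c ^ r = c ^ (r - i - 1) * c * c ^ i := by
      rw [← pow_succ, ← pow_add]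
      congr 1
      omega
    have : (c ^ r + k) / c ^ i % c = k / c ^ i % c := by
      rw [he, add_comm, Nat.add_mul_div_right _ _ (pow_pos hcpos i),
        Nat.add_mul_mod_self_right]
    rw [this, Nat.choose_self]
  rw [h1, Finset.prod_congr rfl h2, Finset.prod_const_one,
    Nat.choose_succ_self_right] at h
  simp only [Nat.cast_one, mul_one] at h
  have := (ZMod.intCast_eq_intCast_iff _ _ _).mpr h
  simp only [Int.cast_natCast] at this
  rw [this, Nat.cast_add, Nat.cast_one, ZMod.natCast_mod]
end

section
/- Let K be an integral domain of prime characteristic c and r ≥ 0. The functions ρ_0, ..., ρ_{c^r - 1} (reduced mod c into K) form a basis of the K-module of all functions f : ℤ≥0 → K that are periodic with period c^r. -/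
/-!
Restricting an `n`-periodic function `ℕ → K` to `{0, …, n-1}` identifies the periodic functions
with `Fin n → K`, so `n` periodic functions form a basis as soon as the matrix of their first
`n` values is invertible. For `ρ_m(k) = C(m+k, m)` this is the symmetric Pascal matrix, which by
Vandermonde's identity factors as `L * Lᵀ` with `L i j = C(i, j)` unitriangular, so its
determinant is `1`.
The functions `ρ_m` with `m < c^r` are `c^r`-periodic because `(X+1)^(N+c^r) = (X+1)^N (X^(c^r)+1)`
in characteristic `c`, and the factor `X^(c^r)` does not touch the coefficients below `c^r`.
-/

open Finset Matrix Polynomial Function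

section Periodic

variable (R : Type*) [CommRing R]

def periodicSubmodule (n : ℕ) : Submodule R (ℕ → R) where
  carrier := {f | Periodic f n}
  zero_mem' _ := rfl
  add_mem' hf hg := hf.add hg
  smul_mem' a _ hf := hf.smul a

variable {R}

theorem Function.Periodic.eq_of_forall_lt {α : Type*} {f g : ℕ → α} {n : ℕ} (hn : 0 < n)
    (hf : Periodic f n) (hg : Periodic g n) (h : ∀ k < n, f k = g k) : f = g := by
  funext k
  rw [← hf.map_mod_nat, ← hg.map_mod_nat, h _ (Nat.mod_lt k hn)]

variable {n : ℕ} (v : Fin n → ℕ → R)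

theorem linearIndependent_of_isUnit_det (hv : IsUnit (Matrix.of fun i j : Fin n => v i j).det) :
    LinearIndependent R v :=
  LinearIndependent.of_comp (LinearMap.funLeft R R (fun j : Fin n => (j : ℕ)))
    (linearIndependent_rows_of_isUnit ((isUnit_iff_isUnit_det _).mpr hv))

theorem span_eq_periodicSubmodule_of_isUnit_det (hn : 0 < n) (hper : ∀ i, Periodic (v i) n)
    (hv : IsUnit (Matrix.of fun i j : Fin n => v i j).det) :
    Submodule.span R (Set.range v) = periodicSubmodule R n := by
  set A := Matrix.of fun i j : Fin n => v i j
  apply le_antisymm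
  · rw [Submodule.span_le]
    rintro _ ⟨i, rfl⟩
    exact hper i
  · intro f hf
    set a := (fun j : Fin n => f j) ᵥ* A⁻¹
    have ha : a ᵥ* A = fun j : Fin n => f j := by
      rw [vecMul_vecMul, nonsing_inv_mul A hv, vecMul_one]
    have hsum_per : Periodic (∑ i, a i • v i) n :=
      (periodicSubmodule R n).sum_mem fun i _ => (periodicSubmodule R n).smul_mem _ (hper i)
    have hsum : ∑ i, a i • v i = f := by
      refine hsum_per.eq_of_forall_lt hn hf fun k hk => ?_
      have := congrFun ha ⟨k, hk⟩
      simpa [vecMul_eq_sum, A, Finset.sum_apply] using this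
    exact (Submodule.mem_span_range_iff_exists_fun R).mpr ⟨a, hsum⟩

end Periodic

theorem Nat.add_choose_eq_sum_range_choose_mul_choose {i n : ℕ} (k : ℕ) (hi : i < n) :
    (i + k).choose i = ∑ j ∈ range n, i.choose j * k.choose j := by
  rw [add_comm i k, Nat.add_choose_eq, Finset.Nat.sum_antidiagonal_eq_sum_range_succ_mk,
    ← Finset.sum_subset (range_subset_range.mpr hi) fun j _ hj => ?_]
  · refine Finset.sum_congr rfl fun j hj => ?_
    rw [Nat.choose_symm (Nat.lt_succ_iff.mp (mem_range.mp hj)), mul_comm]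
  · rw [Nat.choose_eq_zero_of_lt (by simp at hj; omega), zero_mul]

section Pascal

variable (R : Type*) [CommRing R] (n : ℕ)

def pascalLower : Matrix (Fin n) (Fin n) R := Matrix.of fun i j => ((i : ℕ).choose j : R)

def pascalSymm : Matrix (Fin n) (Fin n) R := Matrix.of fun i j => (((i : ℕ) + j).choose i : R)

theorem pascalSymm_eq_mul_transpose : pascalSymm R n = pascalLower R n * (pascalLower R n)ᵀ := by
  ext i j
  simp only [pascalSymm, pascalLower, mul_apply, transpose_apply, of_apply]
  rw [Nat.add_choose_eq_sum_range_choose_mul_choose _ i.2, ← Fin.sum_univ_eq_sum_range]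
  push_cast
  rfl

theorem det_pascalLower : (pascalLower R n).det = 1 := by
  rw [det_of_isLowerTriangular _ fun i j (hij : i < j) => by
    simp [pascalLower, Nat.choose_eq_zero_of_lt (show (i : ℕ) < j from hij)]]
  simp [pascalLower]

theorem det_pascalSymm : (pascalSymm R n).det = 1 := by
  rw [pascalSymm_eq_mul_transpose, det_mul, det_transpose, det_pascalLower, mul_one]

end Pascal

theorem Nat.cast_choose_add_prime_pow (R : Type*) [CommSemiring R] (p : ℕ) [Fact p.Prime] [CharP R p]
    {r m : ℕ} (N : ℕ) (hm : m < p ^ r) : ((N + p ^ r).choose m : R) = (N.choose m : R) := by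
  rw [← coeff_X_add_one_pow, ← coeff_X_add_one_pow, pow_add, add_pow_char_pow, one_pow, mul_add,
    coeff_add, coeff_mul_X_pow', if_neg (not_le.mpr hm), zero_add, mul_one]

theorem stmt_14_general (K : Type*) [CommRing K] (c : ℕ) (hc : c.Prime)
    [CharP K c] (r : ℕ) :
    LinearIndependent K
      (fun m : Fin (c ^ r) => fun k : ℕ => ((((m : ℕ) + k).choose (m : ℕ) : ℕ) : K)) ∧
    ∀ f : ℕ → K,
      (∀ k : ℕ, f (k + c ^ r) = f k) ↔
        f ∈ Submodule.span K
          (Set.range fun m : Fin (c ^ r) =>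
            fun k : ℕ => ((((m : ℕ) + k).choose (m : ℕ) : ℕ) : K)) := by
  have := Fact.mk hc
  set ρ := fun m : Fin (c ^ r) => fun k : ℕ => ((((m : ℕ) + k).choose (m : ℕ) : ℕ) : K)
  have hdet : IsUnit (pascalSymm K (c ^ r)).det := by
    rw [det_pascalSymm]
    exact isUnit_one
  have hper : ∀ m, Periodic (ρ m) (c ^ r) := fun m k => by
    simpa only [ρ, ← add_assoc] using Nat.cast_choose_add_prime_pow K c (m + k) m.2
  refine ⟨linearIndependent_of_isUnit_det ρ hdet, fun f => ?_⟩
  rw [span_eq_periodicSubmodule_of_isUnit_det ρ (pow_pos hc.pos r) hper hdet]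
  rfl

/-- Over an integral domain `K` of prime characteristic `c`, the basic sum-functions
`ρ_0, …, ρ_{c^r-1}` (with `ρ_m(k)` the image in `K` of `C(m+k, m)`) form a basis of
the `K`-module of functions `ℕ → K` of period `c^r`: they are linearly independent,
and their span is exactly the set of such periodic functions. -/
theorem stmt_14 (K : Type*) [CommRing K] [IsDomain K] (c : ℕ) (hc : c.Prime)
    [CharP K c] (r : ℕ) :
    LinearIndependent K
      (fun m : Fin (c ^ r) => fun k : ℕ => ((((m : ℕ) + k).choose (m : ℕ) : ℕ) : K)) ∧
    ∀ f : ℕ → K,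
      (∀ k : ℕ, f (k + c ^ r) = f k) ↔
        f ∈ Submodule.span K
          (Set.range fun m : Fin (c ^ r) =>
            fun k : ℕ => ((((m : ℕ) + k).choose (m : ℕ) : ℕ) : K)) :=
  stmt_14_general K c hc r
end

section
/- Let c be a prime and r ≥ 1. For m, k < c^r, the binomial coefficient binomial(m+k,k) mod c equals binomial(m_r' + k_r', k_r') · binomial(m'+k', k') mod c, where m = m_r' c^{r-1} + m', k = k_r' c^{r-1} + k' with m', k' < c^{r-1}; consequently the c^r × c^r matrix (binomial(m+k,k) mod c)_{0≤m,k<c^r} is invertible over ℤ/cℤ. -/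
/-!
Iterating Lucas' theorem gives `C(n, k) ≡ C(n / p^a, k / p^a) · C(n % p^a, k % p^a) (mod p)`.
For `n = m + k` with no carry out of the low digits this is the stated splitting; with a carry,
`(m + k) % p^a < k % p^a`, so both sides vanish. The same vanishing makes the matrix zero below
its antidiagonal `m + k = p^r - 1`, on which Pascal's rule and `p ∣ C(p^r, k)` for `0 < k < p^r`
give `C(p^r - 1, k) ≡ (-1)^k`.
-/

theorem Nat.mod_pow_div_pow_mod (p : ℕ) {i a : ℕ} (hia : i < a) (n : ℕ) :
    n % p ^ a / p ^ i % p = n / p ^ i % p := by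
  rw [← Nat.add_sub_of_le hia.le, pow_add, Nat.mod_mul_right_div_self,
    Nat.mod_mod_of_dvd _ (dvd_pow_self p (by omega))]

theorem Matrix.isUnit_of_antitriangular {R : Type*} [CommRing R] {n : ℕ}
    (M : Matrix (Fin n) (Fin n) R) (hzero : ∀ i j : Fin n, n ≤ (i : ℕ) + j → M i j = 0)
    (hunit : ∀ i : Fin n, IsUnit (M i i.rev)) : IsUnit M := by
  have htri : (M.submatrix id Fin.revPerm).BlockTriangular id := fun i j hji => by
    refine hzero i (Fin.rev j) ?_
    have : (j : ℕ) < i := hji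
    rw [Fin.val_rev]
    omega
  have hdet : IsUnit (M.submatrix id Fin.revPerm).det := by
    rw [Matrix.det_of_isUpperTriangular htri]
    exact IsUnit.prod_univ_iff.mpr hunit
  rw [Matrix.det_permute'] at hdet
  exact (Matrix.isUnit_iff_isUnit_det M).mpr (isUnit_of_mul_isUnit_right hdet)

namespace Choose

variable {p : ℕ} [Fact p.Prime]

theorem choose_eq_choose_div_pow_mul_choose_mod_pow (a n k : ℕ) :
    (n.choose k : ZMod p) =
      ((n / p ^ a).choose (k / p ^ a) : ZMod p) * ((n % p ^ a).choose (k % p ^ a) : ZMod p) := by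
  have hpos : 0 < p ^ a := pow_pos (Fact.out : p.Prime).pos a
  have hn := (ZMod.intCast_eq_intCast_iff _ _ p).mpr
    (choose_modEq_choose_mul_prod_range_choose (n := n) (k := k) a)
  have hmod := (ZMod.intCast_eq_intCast_iff _ _ p).mpr
    (choose_modEq_prod_range_choose (n := n % p ^ a) (k := k % p ^ a)
      (Nat.mod_lt n hpos) (Nat.mod_lt k hpos))
  push_cast at hn hmod
  rw [hn, hmod]
  congr 1
  refine Finset.prod_congr rfl fun i hi => ?_
  rw [Finset.mem_range] at hi
  rw [Nat.mod_pow_div_pow_mod p hi, Nat.mod_pow_div_pow_mod p hi]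

theorem choose_add_eq_zero_of_pow_le {a m k : ℕ} (hm : m < p ^ a) (hk : k < p ^ a)
    (hmk : p ^ a ≤ m + k) : ((m + k).choose k : ZMod p) = 0 := by
  have hcarry : (m + k) % p ^ a < k := by
    rw [Nat.mod_eq_sub_mod hmk, Nat.mod_eq_of_lt (by omega)]
    omega
  rw [choose_eq_choose_div_pow_mul_choose_mod_pow a, Nat.mod_eq_of_lt hk,
    Nat.choose_eq_zero_of_lt hcarry, Nat.cast_zero, mul_zero]

theorem choose_add_eq_choose_add_div_pow_mul_choose_add_mod_pow (a m k : ℕ) :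
    ((m + k).choose k : ZMod p) =
      ((m / p ^ a + k / p ^ a).choose (k / p ^ a) : ZMod p) *
        ((m % p ^ a + k % p ^ a).choose (k % p ^ a) : ZMod p) := by
  have hpos : 0 < p ^ a := pow_pos (Fact.out : p.Prime).pos a
  rw [choose_eq_choose_div_pow_mul_choose_mod_pow a]
  rcases lt_or_ge (m % p ^ a + k % p ^ a) (p ^ a) with hlt | hge
  · rw [Nat.add_div_eq_of_add_mod_lt hlt, Nat.add_mod_of_add_mod_lt hlt]
  · have hcarry : (m + k) % p ^ a < k % p ^ a := by
      have := Nat.add_mod_add_of_le_add_mod hge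
      have := Nat.mod_lt m hpos
      omega
    rw [Nat.choose_eq_zero_of_lt hcarry,
      choose_add_eq_zero_of_pow_le (Nat.mod_lt m hpos) (Nat.mod_lt k hpos) hge]
    simp

theorem choose_pow_sub_one_eq_neg_one_pow (r : ℕ) {j : ℕ} (hj : j < p ^ r) :
    ((p ^ r - 1).choose j : ZMod p) = (-1) ^ j := by
  induction j with
  | zero => simp
  | succ j ih =>
    have hpos : 0 < p ^ r := pow_pos (Fact.out : p.Prime).pos r
    have hpascal : ((p ^ r).choose (j + 1) : ZMod p) =
        ((p ^ r - 1).choose j : ZMod p) + ((p ^ r - 1).choose (j + 1) : ZMod p) := by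
      rw [← Nat.cast_add, ← Nat.choose_succ_succ', Nat.sub_add_cancel hpos]
    have hvanish : ((p ^ r).choose (j + 1) : ZMod p) = 0 :=
      (ZMod.natCast_eq_zero_iff _ _).mpr
        (Nat.Prime.dvd_choose_pow Fact.out (by omega) (by omega))
    rw [hvanish, ih (by omega)] at hpascal
    linear_combination -hpascal

end Choose

theorem stmt_16_general (c : ℕ) (hc : c.Prime) (r : ℕ) :
    (∀ m k : ℕ, m < c ^ r → k < c ^ r →
      ((m + k).choose k : ZMod c) =
        ((m / c ^ (r - 1) + k / c ^ (r - 1)).choose (k / c ^ (r - 1)) : ZMod c) *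
          ((m % c ^ (r - 1) + k % c ^ (r - 1)).choose (k % c ^ (r - 1)) : ZMod c)) ∧
    IsUnit (Matrix.of fun m k : Fin (c ^ r) =>
      (((m : ℕ) + (k : ℕ)).choose (k : ℕ) : ZMod c)) := by
  have : Fact c.Prime := ⟨hc⟩
  refine ⟨fun m k _ _ =>
    Choose.choose_add_eq_choose_add_div_pow_mul_choose_add_mod_pow (r - 1) m k, ?_⟩
  refine Matrix.isUnit_of_antitriangular _
    (fun i j h => Choose.choose_add_eq_zero_of_pow_le i.isLt j.isLt h) fun i => ?_
  have hsum : (i : ℕ) + (i.rev : ℕ) = c ^ r - 1 := by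
    rw [Fin.val_rev]
    omega
  rw [Matrix.of_apply, hsum, Choose.choose_pow_sub_one_eq_neg_one_pow r (Fin.rev i).isLt]
  exact isUnit_neg_one.pow _

/-- For a prime `c` and `r ≥ 1`: splitting off the top base-`c` digit,
`C(m+k, k) ≡ C(m_r' + k_r', k_r') · C(m' + k', k') (mod c)` for `m, k < c^r`,
where `m = m_r' c^{r-1} + m'`, `k = k_r' c^{r-1} + k'` with `m', k' < c^{r-1}`;
consequently the `c^r × c^r` matrix `(C(m+k,k) mod c)_{m,k}` is invertible over
`ℤ/cℤ`. -/
theorem stmt_16 (c : ℕ) (hc : c.Prime) (r : ℕ) (hr : 1 ≤ r) :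
    (∀ m k : ℕ, m < c ^ r → k < c ^ r →
      ((m + k).choose k : ZMod c) =
        ((m / c ^ (r - 1) + k / c ^ (r - 1)).choose (k / c ^ (r - 1)) : ZMod c) *
          ((m % c ^ (r - 1) + k % c ^ (r - 1)).choose (k % c ^ (r - 1)) : ZMod c)) ∧
    IsUnit (Matrix.of fun m k : Fin (c ^ r) =>
      (((m : ℕ) + (k : ℕ)).choose (k : ℕ) : ZMod c)) :=
  stmt_16_general c hc r
end
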